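/- Let Θ and Θ' be independent random vectors, each uniformly distributed on Δ^{n,u}. Then P(Θ ≤_st Θ') = 1/n. -/

import Mathlib

open MeasureTheory

/-- The usual stochastic order. -/
def stLE {m : ℕ} (θ θ' : Fin m → ℝ) : Prop :=
  ∀ k : Fin m, ∑ i ∈ Finset.Ici k, θ i ≤ ∑ i ∈ Finset.Ici k, θ' i

/-!
Write `x = Θ - Θ'`, so that `∑ x = 0` and, since both vectors have the same total mass,
`Θ ≤_st Θ'` says that every partial sum `x₀ + ⋯ + x_{k-1}` is nonnegative. By the cycle lemma,
some cyclic rotation of `x` has all its partial sums nonnegative; if two different rotations do,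
then a cyclic block of coordinates of `Θ` and of `Θ'` have the same sum, an event of probability
zero because it cuts the `(n-1)`-dimensional simplex in an `(n-2)`-dimensional set. Rotating the
coordinates of both vectors by the same amount preserves the joint law, so the `n` events
"rotation `r` is the good one" are equiprobable and almost surely partition the space: each has
probability `1/n`, and the one for `r = 0` is `Θ ≤_st Θ'`.
-/

open ProbabilityTheory Finset Module Fin.NatCast
open scoped ENNReal

lemma hausdorffMeasure_preimage_singleton_eq_zero {E F : Type*} [NormedAddCommGroup E]
    [NormedSpace ℝ E] [FiniteDimensional ℝ E] [MeasurableSpace E] [BorelSpace E]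
    [AddCommGroup F] [Module ℝ F] (L : E →ₗ[ℝ] F) (y : F) {d : ℝ}
    (hd : finrank ℝ (LinearMap.ker L) < d) : μH[d] (L ⁻¹' {y}) = 0 := by
  rcases (L ⁻¹' {y}).eq_empty_or_nonempty with h | ⟨x₀, hx₀⟩
  · rw [h, measure_empty]
  have hiso : Isometry fun w : LinearMap.ker L => x₀ + (w : E) :=
    (IsometryEquiv.addLeft x₀).isometry.comp isometry_subtype_coe
  have hfib : L ⁻¹' {y} = (fun w : LinearMap.ker L => x₀ + (w : E)) '' Set.univ := by
    ext z
    refine ⟨fun hz => ⟨⟨z - x₀, ?_⟩, trivial, add_sub_cancel x₀ z⟩, ?_⟩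
    · simp_all [LinearMap.mem_ker]
    · rintro ⟨w, -, rfl⟩
      simp_all [LinearMap.mem_ker.mp w.2]
  rw [hfib, hiso.hausdorffMeasure_image (.inl ((Nat.cast_nonneg _).trans hd.le)),
    Real.hausdorffMeasure_of_finrank_lt hd]
  rfl

lemma MeasureTheory.MeasurePreserving.cond {α β : Type*} [MeasurableSpace α] [MeasurableSpace β]
    {μa : Measure α} {μb : Measure β} {f : α → β} (hf : MeasurePreserving f μa μb) {s : Set β}
    (hs : MeasurableSet s) : MeasurePreserving f μa[|f ⁻¹' s] μb[|s] := by
  rw [ProbabilityTheory.cond, ProbabilityTheory.cond, hf.measure_preimage hs.nullMeasurableSet]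
  exact (hf.restrict_preimage hs).smul_measure _

lemma measure_eq_inv_card_of_aePartition {α ι : Type*} [MeasurableSpace α] [Fintype ι]
    {μ : Measure α} [IsProbabilityMeasure μ] {A : ι → Set α} (hA : ∀ i, MeasurableSet (A i))
    (hdisj : Pairwise (Function.onFun (AEDisjoint μ) A)) (hcover : ∀ᵐ x ∂μ, x ∈ ⋃ i, A i)
    (hsame : ∀ i j, μ (A i) = μ (A j)) (i : ι) : μ (A i) = (Fintype.card ι : ℝ≥0∞)⁻¹ := by
  have hunion : μ (⋃ j, A j) = 1 := by
    rw [← measure_univ (μ := μ)]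
    exact measure_congr (ae_eq_univ.2 hcover)
  rw [measure_iUnion₀ hdisj fun j => (hA j).nullMeasurableSet, tsum_fintype,
    sum_congr rfl fun j _ => hsame j i, sum_const, card_univ, nsmul_eq_mul] at hunion
  exact ENNReal.eq_inv_of_mul_eq_one_left (by rwa [mul_comm])

lemma Fin.val_sub_pos_of_ne {N : ℕ} [NeZero N] {r s : Fin N} (hrs : r ≠ s) :
    0 < ((s - r : Fin N) : ℕ) :=
  Nat.pos_of_ne_zero (Fin.val_ne_zero_iff.2 (sub_ne_zero.2 hrs.symm))

namespace UniformSimplex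

section CyclicPartialSums

variable {N : ℕ} [NeZero N] (x : Fin N → ℝ)

/-- `x r + x (r + 1) + ⋯ + x (r + k - 1)`, indices taken mod `N`. -/
def cyclicPartialSum (r : Fin N) (k : ℕ) : ℝ := ∑ i ∈ range k, x (r + i)

def CyclicallyNonneg (r : Fin N) : Prop := ∀ k : Fin N, 0 ≤ cyclicPartialSum x r k

lemma cyclicPartialSum_add (r : Fin N) (a b : ℕ) :
    cyclicPartialSum x r (a + b) = cyclicPartialSum x r a + cyclicPartialSum x (r + a) b := by
  simp only [cyclicPartialSum, sum_range_add, Nat.cast_add, add_assoc]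

lemma cyclicPartialSum_card (r : Fin N) : cyclicPartialSum x r N = ∑ i, x i := by
  rw [cyclicPartialSum, ← Fin.sum_univ_eq_sum_range (fun i => x (r + i))]
  simp only [Fin.cast_val_eq_self]
  exact Equiv.sum_comp (Equiv.addLeft r) x

lemma cyclicPartialSum_comp_add_right (c r : Fin N) (k : ℕ) :
    cyclicPartialSum (fun i => x (i + c)) r k = cyclicPartialSum x (r + c) k := by
  simp only [cyclicPartialSum, add_right_comm]

lemma cyclicPartialSum_sub (y : Fin N → ℝ) (r : Fin N) (k : ℕ) :
    cyclicPartialSum (x - y) r k = cyclicPartialSum x r k - cyclicPartialSum y r k := by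
  simp [cyclicPartialSum, sum_sub_distrib]

lemma cyclicPartialSum_zero (k : Fin N) : cyclicPartialSum x 0 k = ∑ i ∈ Iio k, x i := by
  rw [cyclicPartialSum, ← Nat.Iio_eq_range, ← Fin.map_valEmbedding_Iio, sum_map]
  simp [Fin.cast_val_eq_self]

lemma cyclicPartialSum_single_self {r : Fin N} {k : ℕ} (hk : 0 < k) (hkN : k ≤ N) :
    cyclicPartialSum (Pi.single r 1) r k = 1 := by
  rw [cyclicPartialSum, sum_eq_single_of_mem 0 (mem_range.2 hk)]
  · simp
  · intro j hj hj0
    have hjN : ((j : Fin N) : ℕ) = j := Fin.val_cast_of_lt ((mem_range.1 hj).trans_le hkN)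
    refine Pi.single_eq_of_ne (fun h => hj0 ?_) _
    rw [← hjN, add_eq_left.mp h, Fin.val_zero]

lemma cyclicPartialSum_single_add {r : Fin N} {k : ℕ} (hkN : k < N) :
    cyclicPartialSum (Pi.single (r + (k : Fin N)) 1) r k = 0 := by
  refine sum_eq_zero fun j hj => Pi.single_eq_of_ne (fun h => ?_) _
  have hjk := congrArg Fin.val (add_left_cancel h)
  rw [Fin.val_cast_of_lt ((mem_range.1 hj).trans hkN), Fin.val_cast_of_lt hkN] at hjk
  exact (mem_range.1 hj).ne hjk

variable {x}

lemma cyclicPartialSum_add_card (hx : ∑ i, x i = 0) (r : Fin N) (k : ℕ) :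
    cyclicPartialSum x r (k + N) = cyclicPartialSum x r k := by
  rw [cyclicPartialSum_add, cyclicPartialSum_card, hx, add_zero]

/-- The cycle lemma; a minimiser of `j ↦ cyclicPartialSum x 0 j` is such a starting point. -/
lemma exists_cyclicallyNonneg (hx : ∑ i, x i = 0) : ∃ r, CyclicallyNonneg x r := by
  obtain ⟨r, -, hr⟩ := exists_min_image univ (fun j : Fin N => cyclicPartialSum x 0 j)
    univ_nonempty
  refine ⟨r, fun k => ?_⟩
  have hsplit := cyclicPartialSum_add x 0 r k
  rw [zero_add, Fin.cast_val_eq_self] at hsplit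
  by_cases hk : (r : ℕ) + k < N
  · have := hr ⟨r + k, hk⟩ (mem_univ _)
    simp only at this
    linarith
  · have := hr ⟨r + k - N, by omega⟩ (mem_univ _)
    have hper := cyclicPartialSum_add_card hx 0 (r + k - N)
    rw [Nat.sub_add_cancel (not_lt.mp hk)] at hper
    simp only at this
    linarith

lemma cyclicPartialSum_eq_zero_of_cyclicallyNonneg (hx : ∑ i, x i = 0) {r s : Fin N}
    (hrs : r ≠ s) (hr : CyclicallyNonneg x r) (hs : CyclicallyNonneg x s) :
    cyclicPartialSum x r (s - r : Fin N) = 0 := by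
  have hpos := Fin.val_sub_pos_of_ne hrs
  have hsum := cyclicPartialSum_add x r (s - r : Fin N) (N - (s - r : Fin N))
  rw [Nat.add_sub_cancel' (s - r).is_lt.le, cyclicPartialSum_card, hx, Fin.cast_val_eq_self,
    add_sub_cancel] at hsum
  linarith [hr (s - r), hs ⟨N - (s - r : Fin N), by omega⟩]

end CyclicPartialSums

lemma stLE_iff_cyclicallyNonneg {N : ℕ} [NeZero N] {θ θ' : Fin N → ℝ}
    (h : ∑ i, θ i = ∑ i, θ' i) : stLE θ θ' ↔ CyclicallyNonneg (θ - θ') 0 := by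
  have htail : ∀ (φ : Fin N → ℝ) (k : Fin N), ∑ i ∈ Ici k, φ i = ∑ i, φ i - ∑ i ∈ Iio k, φ i := by
    intro φ k
    rw [← sum_add_sum_compl (Iio k) φ, add_sub_cancel_left]
    congr 1
    ext i; simp
  simp only [stLE, CyclicallyNonneg, cyclicPartialSum_zero, Pi.sub_apply, sum_sub_distrib,
    htail, h, sub_nonneg, sub_le_sub_iff_left]

def simplex (N : ℕ) (u : ℝ) : Set (EuclideanSpace ℝ (Fin N)) :=
  {x | (∀ i, 0 ≤ x i) ∧ ∑ i, x i = u}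

lemma isClosed_simplex (N : ℕ) (u : ℝ) : IsClosed (simplex N u) := by
  simp only [simplex, Set.ofPred_and, Set.ofPred_forall]
  exact (isClosed_iInter fun i => isClosed_le continuous_const (by fun_prop)).inter
    (isClosed_eq (by fun_prop) continuous_const)

section Chart

variable {m : ℕ}

noncomputable def simplexChartLinear (m : ℕ) :
    (Fin m → ℝ) →L[ℝ] EuclideanSpace ℝ (Fin (m + 1)) :=
  (EuclideanSpace.equiv (Fin (m + 1)) ℝ).symm.toContinuousLinearMap ∘L
    ContinuousLinearMap.pi (Fin.snoc (α := fun _ => (Fin m → ℝ) →L[ℝ] ℝ)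
      ContinuousLinearMap.proj (-∑ j, ContinuousLinearMap.proj j))

/-- `y ↦ (y, u - ∑ y)`, a parametrization of the hyperplane `∑ x = u`. -/
noncomputable def simplexChart (u : ℝ) (y : Fin m → ℝ) : EuclideanSpace ℝ (Fin (m + 1)) :=
  simplexChartLinear m y + EuclideanSpace.single (Fin.last m) u

noncomputable def dropLast (m : ℕ) : EuclideanSpace ℝ (Fin (m + 1)) →L[ℝ] (Fin m → ℝ) :=
  ContinuousLinearMap.pi fun j => EuclideanSpace.proj j.castSucc

@[simp] lemma simplexChart_castSucc (u : ℝ) (y : Fin m → ℝ) (j : Fin m) :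
    simplexChart u y j.castSucc = y j := by
  simp [simplexChart, simplexChartLinear, (Fin.castSucc_lt_last j).ne]

@[simp] lemma simplexChart_last (u : ℝ) (y : Fin m → ℝ) :
    simplexChart u y (Fin.last m) = u - ∑ j, y j := by
  simp [simplexChart, simplexChartLinear]; ring

lemma lipschitzWith_simplexChart (u : ℝ) :
    LipschitzWith ‖simplexChartLinear m‖₊ (simplexChart (m := m) u) := by
  have := (isometry_add_right (EuclideanSpace.single (Fin.last m) u)).lipschitz.comp
    (simplexChartLinear m).lipschitz
  rwa [one_mul] at this

lemma dropLast_simplexChart (u : ℝ) (y : Fin m → ℝ) : dropLast m (simplexChart u y) = y := by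
  ext j; simp [dropLast]

lemma simplexChart_dropLast {u : ℝ} {x : EuclideanSpace ℝ (Fin (m + 1))} (hx : ∑ i, x i = u) :
    simplexChart u (dropLast m x) = x := by
  rw [Fin.sum_univ_castSucc] at hx
  ext i
  induction i using Fin.lastCases with
  | last => simp [dropLast]; linarith
  | cast j => simp [dropLast]

lemma simplexChart_mem_simplex {u : ℝ} {y : Fin m → ℝ} (hy : 0 ≤ y) (hyu : ∑ j, y j ≤ u) :
    simplexChart u y ∈ simplex (m + 1) u := by
  refine ⟨fun i => ?_, by simp [Fin.sum_univ_castSucc]⟩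
  induction i using Fin.lastCases with
  | last => simpa using hyu
  | cast j => simpa using hy j

lemma hausdorffMeasure_eq_volume : (μH[(m : ℝ)] : Measure (Fin m → ℝ)) = volume := by
  simpa using hausdorffMeasure_pi_real (ι := Fin m)

lemma hausdorffMeasure_simplex_ne_top (u : ℝ) : μH[(m : ℝ)] (simplex (m + 1) u) ≠ ∞ := by
  have hsub : simplex (m + 1) u ⊆ simplexChart u '' Set.Icc 0 (fun _ => u) := by
    rintro x ⟨hx0, hxu⟩
    refine ⟨dropLast m x, ⟨fun j => hx0 _, fun j => ?_⟩, simplexChart_dropLast hxu⟩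
    simpa [dropLast, ← hxu] using single_le_sum (fun i _ => hx0 i) (mem_univ j.castSucc)
  refine ne_top_of_le_ne_top ?_ ((measure_mono hsub).trans
    ((lipschitzWith_simplexChart u).hausdorffMeasure_image_le (Nat.cast_nonneg m) _))
  rw [hausdorffMeasure_eq_volume]
  exact ENNReal.mul_ne_top (by simp) isCompact_Icc.measure_lt_top.ne

lemma hausdorffMeasure_simplex_ne_zero {u : ℝ} (hu : 0 < u) :
    μH[(m : ℝ)] (simplex (m + 1) u) ≠ 0 := by
  set c : ℝ := u / (m + 1)
  have hsub : Set.Icc 0 (fun _ => c) ⊆ dropLast m '' simplex (m + 1) u := by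
    intro y ⟨hy0, hyc⟩
    refine ⟨simplexChart u y, simplexChart_mem_simplex hy0 ?_, dropLast_simplexChart u y⟩
    calc ∑ j, y j ≤ ∑ _j : Fin m, c := sum_le_sum fun j _ => hyc j
      _ = m * c := by simp
      _ ≤ u := by
        rw [mul_div_assoc', div_le_iff₀ (by positivity)]; nlinarith
  have hpos : 0 < volume (Set.Icc (0 : Fin m → ℝ) fun _ => c) := by
    rw [Real.volume_Icc_pi, pos_iff_ne_zero, prod_ne_zero_iff]
    exact fun j _ => (ENNReal.ofReal_pos.2 (by simp [c]; positivity)).ne'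
  intro h0
  have := (measure_mono hsub).trans
    ((dropLast m).lipschitz.hausdorffMeasure_image_le (Nat.cast_nonneg m) _)
  rw [h0, mul_zero, hausdorffMeasure_eq_volume] at this
  exact hpos.ne' (le_antisymm this bot_le)

end Chart

section Rotation

variable {N : ℕ} [NeZero N]

noncomputable def rotate (c : Fin N) :
    EuclideanSpace ℝ (Fin N) ≃ₗᵢ[ℝ] EuclideanSpace ℝ (Fin N) :=
  LinearIsometryEquiv.piLpCongrLeft 2 ℝ ℝ (Equiv.addRight c).symm

@[simp] lemma rotate_apply (c : Fin N) (x : EuclideanSpace ℝ (Fin N)) (i : Fin N) :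
    rotate c x i = x (i + c) := by
  simp [rotate, LinearIsometryEquiv.piLpCongrLeft_apply, Equiv.piCongrLeft']

lemma preimage_rotate_simplex (c : Fin N) (u : ℝ) : rotate c ⁻¹' simplex N u = simplex N u := by
  ext x
  have hsum : ∑ i, x (i + c) = ∑ i, x i := Equiv.sum_comp (Equiv.addRight c) _
  simp only [Set.mem_preimage, simplex, Set.mem_ofPred_eq, rotate_apply, hsum]
  exact and_congr_left' ⟨fun h i => by simpa using h (i - c), fun h i => h _⟩

end Rotation

section Events

variable {N : ℕ} [NeZero N]

def cyclicallyNonnegSet (r : Fin N) :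
    Set (EuclideanSpace ℝ (Fin N) × EuclideanSpace ℝ (Fin N)) :=
  {p | CyclicallyNonneg (p.1.ofLp - p.2.ofLp) r}

lemma measurableSet_cyclicallyNonnegSet (r : Fin N) :
    MeasurableSet (cyclicallyNonnegSet r) := by
  simp only [cyclicallyNonnegSet, CyclicallyNonneg, Set.ofPred_forall]
  exact MeasurableSet.iInter fun k =>
    measurableSet_le measurable_const (by unfold cyclicPartialSum; fun_prop)

lemma preimage_rotate_cyclicallyNonnegSet (c r : Fin N) :
    Prod.map (rotate c) (rotate c) ⁻¹' cyclicallyNonnegSet r = cyclicallyNonnegSet (r + c) := by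
  ext p
  have : (rotate c p.1).ofLp - (rotate c p.2).ofLp = fun i => (p.1.ofLp - p.2.ofLp) (i + c) := by
    ext i; simp
  simp only [cyclicallyNonnegSet, CyclicallyNonneg, Set.mem_preimage, Set.mem_ofPred_eq,
    Prod.map_fst, Prod.map_snd, this, cyclicPartialSum_comp_add_right]

noncomputable def cyclicPartialSumCLM (r : Fin N) (k : ℕ) : EuclideanSpace ℝ (Fin N) →L[ℝ] ℝ :=
  ∑ i ∈ range k, EuclideanSpace.proj (r + i)

lemma cyclicPartialSumCLM_apply (r : Fin N) (k : ℕ) (z : EuclideanSpace ℝ (Fin N)) :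
    cyclicPartialSumCLM r k z = cyclicPartialSum z.ofLp r k := by
  simp [cyclicPartialSumCLM, cyclicPartialSum]

lemma cyclicPartialSumCLM_single {r s : Fin N} (hrs : r ≠ s) :
    cyclicPartialSumCLM r (s - r : Fin N) (EuclideanSpace.single r 1) = 1 ∧
      cyclicPartialSumCLM r (s - r : Fin N) (EuclideanSpace.single s 1) = 0 := by
  simp only [cyclicPartialSumCLM_apply, PiLp.ofLp_single]
  refine ⟨cyclicPartialSum_single_self (Fin.val_sub_pos_of_ne hrs) (s - r).is_lt.le, ?_⟩
  simpa only [Fin.cast_val_eq_self, add_sub_cancel] using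
    cyclicPartialSum_single_add (r := r) (s - r).is_lt

lemma cyclicPartialSumCLM_eq_of_mem_inter {p : EuclideanSpace ℝ (Fin N) × EuclideanSpace ℝ (Fin N)}
    (hp : ∑ i, p.1 i = ∑ i, p.2 i) {r s : Fin N} (hrs : r ≠ s)
    (hpr : p ∈ cyclicallyNonnegSet r) (hps : p ∈ cyclicallyNonnegSet s) :
    cyclicPartialSumCLM r (s - r : Fin N) p.1 = cyclicPartialSumCLM r (s - r : Fin N) p.2 := by
  have hx : ∑ i, (p.1.ofLp - p.2.ofLp) i = 0 := by simp [sum_sub_distrib, hp]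
  have := cyclicPartialSum_eq_zero_of_cyclicallyNonneg hx hrs hpr hps
  rwa [cyclicPartialSum_sub, sub_eq_zero, ← cyclicPartialSumCLM_apply,
    ← cyclicPartialSumCLM_apply] at this

end Events

lemma hausdorffMeasure_sum_eq_and_eq_eq_zero {m : ℕ}
    (ℓ : EuclideanSpace ℝ (Fin (m + 1)) →L[ℝ] ℝ) {i j : Fin (m + 1)}
    (hi : ℓ (EuclideanSpace.single i 1) = 1) (hj : ℓ (EuclideanSpace.single j 1) = 0)
    (u t : ℝ) : μH[(m : ℝ)] {z | ∑ k, z k = u ∧ ℓ z = t} = 0 := by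
  set L : EuclideanSpace ℝ (Fin (m + 1)) →ₗ[ℝ] ℝ × ℝ :=
    ((∑ k, EuclideanSpace.proj k : EuclideanSpace ℝ (Fin (m + 1)) →L[ℝ] ℝ).prod ℓ).toLinearMap
  have hsurj : Function.Surjective L := by
    rintro ⟨a, b⟩
    refine ⟨(a - b) • EuclideanSpace.single j 1 + b • EuclideanSpace.single i 1, ?_⟩
    simp [L, hi, hj, PiLp.single_apply, sum_add_distrib]
  have hrank : finrank ℝ (LinearMap.ker L) + 2 = m + 1 := by
    have := LinearMap.finrank_range_add_finrank_ker L
    rw [LinearMap.range_eq_top.2 hsurj, finrank_top] at this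
    simp only [finrank_prod, finrank_self, finrank_euclideanSpace, Fintype.card_fin] at this
    omega
  have hset : {z : EuclideanSpace ℝ (Fin (m + 1)) | ∑ k, z k = u ∧ ℓ z = t} = L ⁻¹' {(u, t)} := by
    ext z; simp [L]
  rw [hset]
  refine hausdorffMeasure_preimage_singleton_eq_zero L _ ?_
  have : (finrank ℝ (LinearMap.ker L) : ℝ) + 2 = m + 1 := by exact_mod_cast hrank
  linarith

section UniformMeasure

variable {m : ℕ} {u : ℝ}

noncomputable def uniformSimplex (m : ℕ) (u : ℝ) : Measure (EuclideanSpace ℝ (Fin (m + 1))) :=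
  μH[(m : ℝ)][|simplex (m + 1) u]

lemma isProbabilityMeasure_uniformSimplex (hu : 0 < u) :
    IsProbabilityMeasure (uniformSimplex m u) :=
  cond_isProbabilityMeasure_of_finite (hausdorffMeasure_simplex_ne_zero hu)
    (hausdorffMeasure_simplex_ne_top u)

lemma measurePreserving_rotate_uniformSimplex (c : Fin (m + 1)) :
    MeasurePreserving (rotate c) (uniformSimplex m u) (uniformSimplex m u) := by
  have := ((rotate c).toIsometryEquiv.measurePreserving_hausdorffMeasure m).cond
    (isClosed_simplex (m + 1) u).measurableSet
  rw [uniformSimplex]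
  simpa [preimage_rotate_simplex] using this

lemma uniformSimplex_level_eq_zero (ℓ : EuclideanSpace ℝ (Fin (m + 1)) →L[ℝ] ℝ)
    {i j : Fin (m + 1)} (hi : ℓ (EuclideanSpace.single i 1) = 1)
    (hj : ℓ (EuclideanSpace.single j 1) = 0) (t : ℝ) :
    uniformSimplex m u {z | ℓ z = t} = 0 := by
  rw [uniformSimplex, cond_apply (isClosed_simplex _ _).measurableSet]
  refine mul_eq_zero_of_right _
    (measure_mono_null ?_ (hausdorffMeasure_sum_eq_and_eq_eq_zero ℓ hi hj u t))
  exact fun z ⟨⟨_, hz⟩, hzt⟩ => ⟨hz, hzt⟩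

lemma ae_mem_simplex_prod (hu : 0 < u) :
    ∀ᵐ p ∂(uniformSimplex m u).prod (uniformSimplex m u),
      p ∈ simplex (m + 1) u ×ˢ simplex (m + 1) u := by
  have := isProbabilityMeasure_uniformSimplex (m := m) hu
  have := ae_cond_mem (μ := μH[(m : ℝ)]) (isClosed_simplex (m + 1) u).measurableSet
  exact Measure.measure_prod_compl_eq_zero this this

lemma uniformSimplex_prod_cyclicallyNonnegSet_inter (hu : 0 < u) {r s : Fin (m + 1)}
    (hrs : r ≠ s) :
    (uniformSimplex m u).prod (uniformSimplex m u)
      (cyclicallyNonnegSet r ∩ cyclicallyNonnegSet s) = 0 := by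
  have := isProbabilityMeasure_uniformSimplex (m := m) hu
  set ℓ := cyclicPartialSumCLM r (s - r : Fin (m + 1))
  obtain ⟨hℓr, hℓs⟩ := cyclicPartialSumCLM_single hrs
  have hties : (uniformSimplex m u).prod (uniformSimplex m u) {p | ℓ p.1 = ℓ p.2} = 0 := by
    rw [Measure.measure_prod_null (measurableSet_eq_fun (by fun_prop) (by fun_prop))]
    refine ae_of_all _ fun x => ?_
    show uniformSimplex m u {y | ℓ x = ℓ y} = 0
    simpa only [eq_comm (a := ℓ x)] using uniformSimplex_level_eq_zero ℓ hℓr hℓs (ℓ x)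
  refine measure_mono_null_ae ?_ hties
  filter_upwards [ae_mem_simplex_prod hu] with p hp ⟨hpr, hps⟩
  exact cyclicPartialSumCLM_eq_of_mem_inter (hp.1.2.trans hp.2.2.symm) hrs hpr hps

theorem uniformSimplex_prod_cyclicallyNonnegSet (hu : 0 < u) (r : Fin (m + 1)) :
    (uniformSimplex m u).prod (uniformSimplex m u) (cyclicallyNonnegSet r) =
      ((m + 1 : ℕ) : ℝ≥0∞)⁻¹ := by
  have := isProbabilityMeasure_uniformSimplex (m := m) hu
  have hrot (c : Fin (m + 1)) := (measurePreserving_rotate_uniformSimplex (u := u) c).prod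
    (measurePreserving_rotate_uniformSimplex (u := u) c)
  simpa using measure_eq_inv_card_of_aePartition measurableSet_cyclicallyNonnegSet
    (fun r s hrs => uniformSimplex_prod_cyclicallyNonnegSet_inter hu hrs)
    (by
      filter_upwards [ae_mem_simplex_prod hu] with p hp
      exact Set.mem_iUnion.2 (exists_cyclicallyNonneg (by simp [sum_sub_distrib, hp.1.2, hp.2.2])))
    (fun i j => by
      rw [← (hrot (i - j)).measure_preimage (measurableSet_cyclicallyNonnegSet j).nullMeasurableSet,
        preimage_rotate_cyclicallyNonnegSet, add_sub_cancel])
    r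

lemma stLE_ae_eq_cyclicallyNonnegSet_zero (hu : 0 < u) :
    {p : EuclideanSpace ℝ (Fin (m + 1)) × EuclideanSpace ℝ (Fin (m + 1)) |
        stLE (fun j => p.1 j) (fun j => p.2 j)}
      =ᵐ[(uniformSimplex m u).prod (uniformSimplex m u)] cyclicallyNonnegSet 0 := by
  filter_upwards [ae_mem_simplex_prod hu] with p hp
  exact propext (stLE_iff_cyclicallyNonneg (hp.1.2.trans hp.2.2.symm))

end UniformMeasure

end UniformSimplex

open UniformSimplex

/-- For `Θ, Θ'` independent and uniform on the simplex `Δ^{n,u}` (normalized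
`(n-1)`-dimensional Hausdorff measure), `P(Θ ≤_st Θ') = 1/n`. -/
theorem prob_st (n : ℕ) (hn : 2 ≤ n) (u : ℝ) (hu : 0 < u)
    (S : Set (EuclideanSpace ℝ (Fin n)))
    (hS : S = {x | (∀ i, 0 ≤ x i) ∧ ∑ i, x i = u})
    (μ : Measure (EuclideanSpace ℝ (Fin n)))
    (hμ : μ = (μH[(n : ℝ) - 1] S)⁻¹ • (μH[(n : ℝ) - 1]).restrict S) :
    (μ.prod μ) {p | stLE (fun j => p.1 j) (fun j => p.2 j)} = ((n : ENNReal))⁻¹ := by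
  obtain ⟨m, rfl⟩ : ∃ m, n = m + 1 := ⟨n - 1, by omega⟩
  rw [show ((m + 1 : ℕ) : ℝ) - 1 = m by push_cast; ring] at hμ
  subst hS hμ
  change (uniformSimplex m u).prod (uniformSimplex m u) _ = _
  rw [measure_congr (stLE_ae_eq_cyclicallyNonnegSet_zero hu),
    uniformSimplex_prod_cyclicallyNonnegSet hu]
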